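/- arXiv:2106.13587 — 2 statements merged into one kernel-verified Lean document; each statement's English description precedes it below -/
import Mathlib

section
/- Let n, p be positive integers, let B : Fin n → Fin p be a surjective block assignment with every block nonempty, let M : Fin p × Fin p → ℕ be a block adjacency matrix with total mass m = ∑_{r,s} M(r,s) > 0. For each k ≥ 1, let G_k be the random multigraph on n nodes obtained by, independently for each ordered pair of blocks (r,s), placing k·M(r,s) edges independently and uniformly at random among the ordered node pairs (u,v) with B(u) = r and B(v) = s, and let W_{G_k}(u,v) be the resulting edge multiplicity. Let the barycenter weights be W_k(u,v) = k·M(B(u),B(v)) / (|B⁻¹(B(u))|·|B⁻¹(B(v))|). Then the normalized edit distance ned(G_k, G_{S(k)}) = (1/(2km)) ∑_{u,v} |W_{G_k}(u,v) − W_k(u,v)| converges to 0 in probability as k → ∞, i.e. for every α > 0, ℙ[ned(G_k, G_{S(k)}) > α] → 0. -/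
open MeasureTheory Filter Finset

noncomputable section

/-- Sample space of the microcanonical stochastic blockmodel `(B, M)`: for each ordered pair of
blocks `(r, s)`, a placement of the `M (r, s)` edges among the ordered node pairs `(u, v)` with
`B u = r` and `B v = s`. -/
abbrev SBMSpace {n p : ℕ} (B : Fin n → Fin p) (M : Fin p × Fin p → ℕ) : Type :=
  ∀ rs : Fin p × Fin p, Fin (M rs) → {uv : Fin n × Fin n // B uv.1 = rs.1 ∧ B uv.2 = rs.2}

/-- The uniform distribution on the SBM sample space: each of the `M (r, s)` edges is placed
independently and uniformly at random among the admissible node pairs. -/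
def sbmPMF {n p : ℕ} (B : Fin n → Fin p) (hB : Function.Surjective B)
    (M : Fin p × Fin p → ℕ) : PMF (SBMSpace B M) :=
  haveI : Nonempty (SBMSpace B M) :=
    ⟨fun rs _ => ⟨((hB rs.1).choose, (hB rs.2).choose),
      (hB rs.1).choose_spec, (hB rs.2).choose_spec⟩⟩
  PMF.uniformOfFintype _

/-- Edge multiplicity `W_G(u, v)` of the multigraph encoded by the outcome `ω`. -/
def sbmWeight {n p : ℕ} {B : Fin n → Fin p} {M : Fin p × Fin p → ℕ}
    (ω : SBMSpace B M) (uv : Fin n × Fin n) : ℕ :=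
  (univ.filter fun a : Fin (M (B uv.1, B uv.2)) => ((ω (B uv.1, B uv.2)) a).val = uv).card

/-- Barycenter weight matrix of the stochastic blockmodel `(B, M)`:
`W(u, v) = M(B u, B v) / (|B⁻¹(B u)| · |B⁻¹(B v)|)`. -/
def sbmBarycenter {n p : ℕ} (B : Fin n → Fin p) (M : Fin p × Fin p → ℕ)
    (uv : Fin n × Fin n) : ℝ :=
  (M (B uv.1, B uv.2) : ℝ) /
    (((univ.filter fun w : Fin n => B w = B uv.1).card : ℝ) *
      ((univ.filter fun w : Fin n => B w = B uv.2).card : ℝ))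

/-- Normalized edit distance between two real weight matrices, with total edge count `t`. -/
def ned {n : ℕ} (t : ℝ) (W₁ W₂ : Fin n × Fin n → ℝ) : ℝ :=
  (1 / (2 * t)) * ∑ uv : Fin n × Fin n, |W₁ uv - W₂ uv|


section aux
variable {ι : Type} [DecidableEq ι] [Fintype ι]

lemma sum_eval {T : ι → Type} [∀ i, Fintype (T i)] (i : ι) (g : T i → ℝ) :
    (Fintype.card (T i) : ℝ) * ∑ ω : ∀ j, T j, g (ω i)
      = (Fintype.card (∀ j, T j) : ℝ) * ∑ t, g t := by
  rw [← Equiv.sum_comp (Equiv.piSplitAt i T).symm (fun ω => g (ω i)),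
      Fintype.card_congr (Equiv.piSplitAt i T), Fintype.card_prod]
  simp [Fintype.sum_prod_type, ← Finset.mul_sum]
  ring

lemma sum_eval2 {T : ι → Type} [∀ i, Fintype (T i)] {i j : ι} (hij : j ≠ i)
    (g : T i → ℝ) (h : T j → ℝ) :
    ((Fintype.card (T i) : ℝ) * (Fintype.card (T j) : ℝ)) * ∑ ω : ∀ k, T k, g (ω i) * h (ω j)
      = (Fintype.card (∀ k, T k) : ℝ) * ((∑ t, g t) * (∑ t, h t)) := by
  rw [← Equiv.sum_comp (Equiv.piSplitAt i T).symm (fun ω => g (ω i) * h (ω j)),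
      Fintype.card_congr (Equiv.piSplitAt i T), Fintype.card_prod]
  simp only [Fintype.sum_prod_type, Equiv.piSplitAt_symm_apply, dif_pos rfl, dif_neg hij,
    dite_true, dite_eq_ite, if_true]
  rw [← Finset.sum_mul_sum]
  have h2 := sum_eval (T := fun k : {k // k ≠ i} => T k) ⟨j, hij⟩ h
  rw [Nat.cast_mul]
  rw [show ((Fintype.card (T i) : ℝ) * (Fintype.card (T j) : ℝ)) *
      ((∑ t : T i, g t) * ∑ x : (j : { j // j ≠ i }) → T ↑j, h (x ⟨j, hij⟩))
    = (Fintype.card (T i) : ℝ) * (∑ t : T i, g t) *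
      ((Fintype.card (T j) : ℝ) * ∑ x : (j : { j // j ≠ i }) → T ↑j, h (x ⟨j, hij⟩)) by ring, h2]
  ring

lemma inner_bound {S : Type} [Fintype S] [DecidableEq S] [Nonempty S] (K : ℕ) (x : S) :
    ∑ f : Fin K → S, (((univ.filter fun a => f a = x).card : ℝ)
        - (K : ℝ) / (Fintype.card S : ℝ)) ^ 2
      ≤ (Fintype.card (Fin K → S) : ℝ) * K := by
  classical
  set N : ℝ := (Fintype.card S : ℝ) with hNdef
  set Pi : ℝ := (Fintype.card (Fin K → S) : ℝ) with hPidef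
  have hN1 : 1 ≤ N := by rw [hNdef]; norm_cast; exact Fintype.card_pos
  have hN0 : (0:ℝ) < N := lt_of_lt_of_le one_pos hN1
  have hPi0 : (0:ℝ) ≤ Pi := by positivity
  have hK0 : (0:ℝ) ≤ (K:ℝ) := by positivity
  set χ : S → ℝ := fun s => if s = x then 1 else 0 with hχdef
  have hχsum : ∑ s, χ s = 1 := by simp [hχdef]
  have hχidem : ∀ s, χ s * χ s = χ s := by
    intro s; by_cases h : s = x <;> simp [hχdef, h]
  set C : (Fin K → S) → ℝ := fun f => ∑ a, χ (f a) with hCdef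
  have hcnt : ∀ f : Fin K → S, ((univ.filter fun a => f a = x).card : ℝ) = C f := by
    intro f
    rw [hCdef, Finset.card_filter]
    push_cast
    simp [hχdef]
  have E1 : ∀ a : Fin K, N * ∑ f : Fin K → S, χ (f a) = Pi := by
    intro a
    have := sum_eval (T := fun _ : Fin K => S) a χ
    simpa only [hχsum, mul_one] using this
  have E2 : ∀ a b : Fin K, b ≠ a → (N * N) * ∑ f : Fin K → S, χ (f a) * χ (f b) = Pi := by
    intro a b hab
    have := sum_eval2 (T := fun _ : Fin K => S) hab χ χ
    simpa only [hχsum, mul_one, one_mul] using this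
  -- first moment
  have hA : N * ∑ f : Fin K → S, C f = K * Pi := by
    simp only [hCdef]
    rw [Finset.sum_comm, Finset.mul_sum]
    simp only [E1]
    simp [mul_comm]
  -- second moment bound
  have hB : (N * N) * ∑ f : Fin K → S, (C f) ^ 2 ≤ (K:ℝ) * N * Pi + (K:ℝ) * (K:ℝ) * Pi := by
    have h1 : ∀ f : Fin K → S, (C f) ^ 2 = ∑ a, ∑ b, χ (f a) * χ (f b) := by
      intro f; rw [hCdef, sq, Finset.sum_mul_sum]
    calc (N * N) * ∑ f : Fin K → S, (C f) ^ 2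
        = ∑ a : Fin K, ∑ b : Fin K, (N * N) * ∑ f : Fin K → S, χ (f a) * χ (f b) := by
          simp only [h1]
          rw [Finset.sum_comm, Finset.mul_sum]
          refine Finset.sum_congr rfl fun a _ => ?_
          rw [Finset.sum_comm, Finset.mul_sum]
      _ ≤ ∑ a : Fin K, (N * Pi + (K:ℝ) * Pi) := by
          refine Finset.sum_le_sum fun a _ => ?_
          rw [← Finset.add_sum_erase _ _ (mem_univ a)]
          have hdiag : (N * N) * ∑ f : Fin K → S, χ (f a) * χ (f a) = N * Pi := by
            simp only [hχidem]
            rw [mul_assoc, E1]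
          refine add_le_add hdiag.le ?_
          calc ∑ b ∈ univ.erase a, (N * N) * ∑ f : Fin K → S, χ (f a) * χ (f b)
              = ∑ b ∈ univ.erase a, Pi := by
                refine Finset.sum_congr rfl fun b hb => E2 a b (Finset.ne_of_mem_erase hb)
            _ ≤ (K:ℝ) * Pi := by
                rw [Finset.sum_const, nsmul_eq_mul]
                have h1 : ((univ.erase a).card : ℝ) ≤ (K:ℝ) := by
                  exact_mod_cast le_trans (Finset.card_erase_le) (by simp)
                exact mul_le_mul_of_nonneg_right h1 hPi0
      _ = (K:ℝ) * (N * Pi + (K:ℝ) * Pi) := by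
          rw [Finset.sum_const, Finset.card_univ, Fintype.card_fin, nsmul_eq_mul]
      _ = (K:ℝ) * N * Pi + (K:ℝ) * (K:ℝ) * Pi := by ring
  -- centered second moment
  have hC2 : ∑ f : Fin K → S, (N * C f - K) ^ 2 ≤ (K:ℝ) * N * Pi := by
    have expand : ∑ f : Fin K → S, (N * C f - K) ^ 2
        = (N * N) * (∑ f : Fin K → S, (C f) ^ 2)
          - (2 * K) * (N * ∑ f : Fin K → S, C f) + Pi * ((K:ℝ) * K) := by
      rw [Finset.mul_sum, Finset.mul_sum, Finset.mul_sum, ← Finset.sum_sub_distrib]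
      rw [show Pi * ((K:ℝ) * K) = ∑ _f : Fin K → S, ((K:ℝ) * K) by
        rw [Finset.sum_const, nsmul_eq_mul]; rfl]
      rw [← Finset.sum_add_distrib]
      exact Finset.sum_congr rfl fun f _ => by ring
    rw [expand, hA]
    nlinarith [hB]
  -- conclude
  have key : ∀ f : Fin K → S, (C f - (K:ℝ)/N) ^ 2 = (N * C f - K) ^ 2 / (N * N) := by
    intro f
    rw [eq_div_iff (by positivity)]
    field_simp
  calc ∑ f : Fin K → S, (((univ.filter fun a => f a = x).card : ℝ) - (K:ℝ)/N) ^ 2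
      = (∑ f : Fin K → S, (N * C f - K) ^ 2) / (N * N) := by
        rw [Finset.sum_div]
        exact Finset.sum_congr rfl fun f _ => by rw [hcnt f, key f]
    _ ≤ Pi * K := by
        rw [div_le_iff₀ (by positivity)]
        nlinarith [hC2, mul_nonneg (mul_nonneg (mul_nonneg hK0 hPi0) hN0.le)
          (sub_nonneg.mpr hN1)]
end aux

set_option maxHeartbeats 1000000 in
lemma dev_bound {n p : ℕ} (B : Fin n → Fin p)
    (M' : Fin p × Fin p → ℕ) (uv : Fin n × Fin n) :
    ∑ ω : SBMSpace B M', |(sbmWeight ω uv : ℝ) - sbmBarycenter B M' uv|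
      ≤ (Fintype.card (SBMSpace B M') : ℝ) * Real.sqrt (M' (B uv.1, B uv.2)) := by
  classical
  set Sub := {x : Fin n × Fin n // B x.1 = B uv.1 ∧ B x.2 = B uv.2} with hSub
  haveI hne : Nonempty Sub := ⟨⟨uv, rfl, rfl⟩⟩
  set K : ℕ := M' (B uv.1, B uv.2) with hK
  set x0 : Sub := ⟨uv, rfl, rfl⟩ with hx0
  set N : ℝ := (Fintype.card Sub : ℝ) with hN
  have hN0 : (0:ℝ) < N := by rw [hN]; exact_mod_cast Fintype.card_pos
  -- barycenter = K / N
  have hbary : sbmBarycenter B M' uv = (K : ℝ) / N := by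
    have hcard : Fintype.card Sub
        = (univ.filter fun w : Fin n => B w = B uv.1).card *
          (univ.filter fun w : Fin n => B w = B uv.2).card := by
      refine (Fintype.card_congr (Equiv.subtypeProdEquivProd
        (p := fun u : Fin n => B u = B uv.1) (q := fun v : Fin n => B v = B uv.2))).trans ?_
      rw [Fintype.card_prod, Fintype.card_subtype, Fintype.card_subtype]
    rw [sbmBarycenter, hN]
    rw [hcard]
    push_cast
    rfl
  -- rewrite the weight as a filter count over ω (B uv.1, B uv.2)
  have hw : ∀ ω : SBMSpace B M', (sbmWeight ω uv : ℝ)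
      = ((univ.filter fun a : Fin K => (ω (B uv.1, B uv.2)) a = x0).card : ℝ) := by
    intro ω
    rw [sbmWeight]
    congr 1
    refine congrArg _ (Finset.filter_congr fun a _ => ?_)
    simp [hx0, Subtype.ext_iff]
  -- second moment bound over the full sample space
  have key2 : ∑ ω : SBMSpace B M', ((sbmWeight ω uv : ℝ) - (K:ℝ)/N)^2
      ≤ (Fintype.card (SBMSpace B M') : ℝ) * K := by
    have hmain := sum_eval (ι := Fin p × Fin p)
      (T := fun rs => Fin (M' rs) → {x : Fin n × Fin n // B x.1 = rs.1 ∧ B x.2 = rs.2})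
      (B uv.1, B uv.2)
      (fun f => (((univ.filter fun a => f a = x0).card : ℝ) - (K:ℝ)/N)^2)
    have hinner := inner_bound (S := Sub) K x0
    have hTpos : (0:ℝ) < (Fintype.card (Fin K → Sub) : ℝ) := by exact_mod_cast Fintype.card_pos
    have hΩ0 : (0:ℝ) ≤ (Fintype.card (SBMSpace B M') : ℝ) := by positivity
    have step : (Fintype.card (Fin K → Sub) : ℝ) *
        ∑ ω : SBMSpace B M', ((sbmWeight ω uv : ℝ) - (K:ℝ)/N)^2
        ≤ (Fintype.card (Fin K → Sub) : ℝ) *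
          ((Fintype.card (SBMSpace B M') : ℝ) * K) := by
      have : ∑ ω : SBMSpace B M', ((sbmWeight ω uv : ℝ) - (K:ℝ)/N)^2
          = ∑ ω : SBMSpace B M',
            (((univ.filter fun a : Fin K => (ω (B uv.1, B uv.2)) a = x0).card : ℝ) - (K:ℝ)/N)^2 :=
        Finset.sum_congr rfl fun ω _ => by rw [hw ω]
      rw [this]
      calc (Fintype.card (Fin K → Sub) : ℝ) * ∑ ω : SBMSpace B M',
            (((univ.filter fun a : Fin K => (ω (B uv.1, B uv.2)) a = x0).card : ℝ) - (K:ℝ)/N)^2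
          = (Fintype.card (SBMSpace B M') : ℝ) *
            ∑ f : Fin K → Sub, (((univ.filter fun a => f a = x0).card : ℝ) - (K:ℝ)/N)^2 := hmain
        _ ≤ (Fintype.card (SBMSpace B M') : ℝ) * ((Fintype.card (Fin K → Sub) : ℝ) * K) := by
            exact mul_le_mul_of_nonneg_left hinner hΩ0
        _ = (Fintype.card (Fin K → Sub) : ℝ) * ((Fintype.card (SBMSpace B M') : ℝ) * K) := by
            ring
    exact le_of_mul_le_mul_left step hTpos
  -- Cauchy–Schwarz
  have CS := sq_sum_le_card_mul_sum_sq (s := (univ : Finset (SBMSpace B M')))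
    (f := fun ω => |(sbmWeight ω uv : ℝ) - sbmBarycenter B M' uv|)
  rw [hbary] at CS ⊢
  have habs : ∀ ω : SBMSpace B M',
      |(sbmWeight ω uv : ℝ) - (K:ℝ)/N|^2 = ((sbmWeight ω uv : ℝ) - (K:ℝ)/N)^2 :=
    fun ω => sq_abs _
  have hΩ0 : (0:ℝ) ≤ (Fintype.card (SBMSpace B M') : ℝ) := by positivity
  have hsum0 : (0:ℝ) ≤ ∑ ω : SBMSpace B M', |(sbmWeight ω uv : ℝ) - (K:ℝ)/N| :=
    Finset.sum_nonneg fun ω _ => abs_nonneg _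
  have h2 : (∑ ω : SBMSpace B M', |(sbmWeight ω uv : ℝ) - (K:ℝ)/N|)^2
      ≤ ((Fintype.card (SBMSpace B M') : ℝ))^2 * K := by
    calc (∑ ω : SBMSpace B M', |(sbmWeight ω uv : ℝ) - (K:ℝ)/N|)^2
        ≤ (Fintype.card (SBMSpace B M') : ℝ) *
          ∑ ω : SBMSpace B M', |(sbmWeight ω uv : ℝ) - (K:ℝ)/N|^2 := by
          rw [Finset.card_univ] at CS
          exact CS
      _ = (Fintype.card (SBMSpace B M') : ℝ) *
          ∑ ω : SBMSpace B M', ((sbmWeight ω uv : ℝ) - (K:ℝ)/N)^2 := by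
          refine congrArg _ (Finset.sum_congr rfl fun ω _ => habs ω)
      _ ≤ (Fintype.card (SBMSpace B M') : ℝ) * ((Fintype.card (SBMSpace B M') : ℝ) * K) :=
          mul_le_mul_of_nonneg_left key2 hΩ0
      _ = ((Fintype.card (SBMSpace B M') : ℝ))^2 * K := by ring
  calc ∑ ω : SBMSpace B M', |(sbmWeight ω uv : ℝ) - (K:ℝ)/N|
      = Real.sqrt ((∑ ω : SBMSpace B M', |(sbmWeight ω uv : ℝ) - (K:ℝ)/N|)^2) :=
        (Real.sqrt_sq hsum0).symm
    _ ≤ Real.sqrt (((Fintype.card (SBMSpace B M') : ℝ))^2 * K) := Real.sqrt_le_sqrt h2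
    _ = (Fintype.card (SBMSpace B M') : ℝ) * Real.sqrt K := by
        rw [Real.sqrt_mul (by positivity), Real.sqrt_sq hΩ0]

lemma tendsto_sqrt_atTop : Tendsto Real.sqrt atTop atTop := by
  refine Filter.tendsto_atTop_atTop.2 fun b => ⟨b^2, fun a ha => ?_⟩
  calc b ≤ |b| := le_abs_self b
    _ = Real.sqrt (b^2) := (Real.sqrt_sq_eq_abs b).symm
    _ ≤ Real.sqrt a := Real.sqrt_le_sqrt ha


set_option maxHeartbeats 1000000 in
/-- For a scaled stochastic blockmodel `S(k) = (B, k·M)` with surjective block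
assignment `B` and total mass `m = ∑ M(r,s) > 0`, the normalized edit distance between a random
graph `G_k` drawn from `S(k)` and the model barycenter converges to `0` in probability:
for every `α > 0`, `ℙ[ned(G_k, G_{S(k)}) > α] → 0` as `k → ∞`. -/
theorem stmt0 (n p : ℕ) (hn : 0 < n) (hp : 0 < p)
    (B : Fin n → Fin p) (hB : Function.Surjective B)
    (M : Fin p × Fin p → ℕ) (m : ℕ) (hm : ∑ rs : Fin p × Fin p, M rs = m) (hm0 : 0 < m) :
    ∀ α : ℝ, 0 < α →
      Tendsto
        (fun k : ℕ =>
          ((sbmPMF B hB (fun rs => k * M rs)).toOuterMeasure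
            {ω : SBMSpace B (fun rs => k * M rs) |
              ned ((k : ℝ) * (m : ℝ)) (fun uv => (sbmWeight ω uv : ℝ))
                (sbmBarycenter B (fun rs => k * M rs)) > α}).toReal)
        atTop (nhds 0) := by
  classical
  intro α hα
  set C : ℝ := (Fintype.card (Fin n × Fin n) : ℝ) / (2 * α) with hC
  have hbound : ∀ k : ℕ, 1 ≤ k →
      ((sbmPMF B hB (fun rs => k * M rs)).toOuterMeasure
        {ω : SBMSpace B (fun rs => k * M rs) |
          ned ((k : ℝ) * (m : ℝ)) (fun uv => (sbmWeight ω uv : ℝ))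
            (sbmBarycenter B (fun rs => k * M rs)) > α}).toReal
        ≤ C * (Real.sqrt ((k:ℝ) * m))⁻¹ := by
    intro k hk
    set M' : Fin p × Fin p → ℕ := fun rs => k * M rs with hM'
    haveI hne : Nonempty (SBMSpace B M') :=
      ⟨fun rs _ => ⟨((hB rs.1).choose, (hB rs.2).choose),
        (hB rs.1).choose_spec, (hB rs.2).choose_spec⟩⟩
    set km : ℝ := (k:ℝ) * m with hkm
    have hkm0 : (0:ℝ) < km := by
      rw [hkm]
      have : (1:ℝ) ≤ (k:ℝ) := by exact_mod_cast hk
      have : (1:ℝ) ≤ (m:ℝ) := by exact_mod_cast hm0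
      positivity
    set s : Set (SBMSpace B M') := {ω : SBMSpace B M' |
      ned km (fun uv => (sbmWeight ω uv : ℝ)) (sbmBarycenter B M') > α} with hs
    set Ω : ℝ := (Fintype.card (SBMSpace B M') : ℝ) with hΩ
    have hΩ0 : (0:ℝ) < Ω := by rw [hΩ]; exact_mod_cast Fintype.card_pos
    -- expectation bound
    have hexp : ∑ ω : SBMSpace B M',
        ned km (fun uv => (sbmWeight ω uv : ℝ)) (sbmBarycenter B M')
        ≤ Ω * ((Fintype.card (Fin n × Fin n) : ℝ) * Real.sqrt km / (2 * km)) := by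
      have h1 : ∀ uv : Fin n × Fin n,
          ∑ ω : SBMSpace B M', |(sbmWeight ω uv : ℝ) - sbmBarycenter B M' uv|
            ≤ Ω * Real.sqrt km := by
        intro uv
        refine (dev_bound B M' uv).trans ?_
        have hle : (M' (B uv.1, B uv.2) : ℝ) ≤ km := by
          rw [hkm, hM']
          push_cast
          have : M (B uv.1, B uv.2) ≤ m := by
            rw [← hm]
            exact Finset.single_le_sum (fun rs _ => Nat.zero_le _) (mem_univ _)
          have h2 : (M (B uv.1, B uv.2) : ℝ) ≤ (m:ℝ) := by exact_mod_cast this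
          have h3 : (1:ℝ) ≤ (k:ℝ) := by exact_mod_cast hk
          nlinarith
        exact mul_le_mul_of_nonneg_left (Real.sqrt_le_sqrt hle) hΩ0.le
      calc ∑ ω : SBMSpace B M',
            ned km (fun uv => (sbmWeight ω uv : ℝ)) (sbmBarycenter B M')
          = (1 / (2 * km)) * ∑ uv : Fin n × Fin n, ∑ ω : SBMSpace B M',
              |(sbmWeight ω uv : ℝ) - sbmBarycenter B M' uv| := by
            simp only [ned, ← Finset.mul_sum]
            rw [Finset.sum_comm]
        _ ≤ (1 / (2 * km)) * ∑ _uv : Fin n × Fin n, Ω * Real.sqrt km := by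
            refine mul_le_mul_of_nonneg_left ?_ (by positivity)
            exact Finset.sum_le_sum fun uv _ => h1 uv
        _ = Ω * ((Fintype.card (Fin n × Fin n) : ℝ) * Real.sqrt km / (2 * km)) := by
            rw [Finset.sum_const, Finset.card_univ, nsmul_eq_mul]
            ring
    -- ned is nonnegative
    have hned0 : ∀ ω : SBMSpace B M',
        0 ≤ ned km (fun uv => (sbmWeight ω uv : ℝ)) (sbmBarycenter B M') := by
      intro ω
      rw [ned]
      have : (0:ℝ) ≤ ∑ uv : Fin n × Fin n,
          |(sbmWeight ω uv : ℝ) - sbmBarycenter B M' uv| :=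
        Finset.sum_nonneg fun uv _ => abs_nonneg _
      positivity
    -- Markov
    set A : Finset (SBMSpace B M') := univ.filter (fun ω => ω ∈ s) with hA
    have hmarkov : (A.card : ℝ) * α ≤ ∑ ω : SBMSpace B M',
        ned km (fun uv => (sbmWeight ω uv : ℝ)) (sbmBarycenter B M') := by
      calc (A.card : ℝ) * α = ∑ _x ∈ A, α := by
            rw [Finset.sum_const, nsmul_eq_mul]
        _ ≤ ∑ ω ∈ A, ned km (fun uv => (sbmWeight ω uv : ℝ)) (sbmBarycenter B M') := by
            refine Finset.sum_le_sum fun ω hω => ?_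
            have : ω ∈ s := (Finset.mem_filter.mp hω).2
            exact le_of_lt this
        _ ≤ ∑ ω : SBMSpace B M', ned km (fun uv => (sbmWeight ω uv : ℝ))
              (sbmBarycenter B M') :=
            Finset.sum_le_sum_of_subset_of_nonneg (Finset.subset_univ _)
              fun ω _ _ => hned0 ω
    -- compute the measure
    have hP : ((sbmPMF B hB M').toOuterMeasure s).toReal = (A.card : ℝ) / Ω := by
      have h0 : sbmPMF B hB M' = PMF.uniformOfFintype (SBMSpace B M') := rfl
      rw [h0, PMF.toOuterMeasure_apply, tsum_fintype]
      rw [ENNReal.toReal_sum (fun ω _ => ?fin)]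
      case fin =>
        have hne' : (PMF.uniformOfFintype (SBMSpace B M')) ω ≠ ⊤ := by
          rw [PMF.uniformOfFintype_apply]
          exact ENNReal.inv_ne_top.mpr (Nat.cast_ne_zero.mpr Fintype.card_ne_zero)
        exact ne_top_of_le_ne_top hne' ((Set.indicator_le_self s _) ω)
      have hterm : ∀ ω : SBMSpace B M',
          (s.indicator (⇑(PMF.uniformOfFintype (SBMSpace B M'))) ω).toReal
            = if ω ∈ s then Ω⁻¹ else 0 := by
        intro ω
        rw [Set.indicator_apply]
        split
        · rw [PMF.uniformOfFintype_apply, hΩ, ENNReal.toReal_inv]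
          norm_num
        · simp
      rw [Finset.sum_congr rfl (fun ω _ => hterm ω), ← Finset.sum_filter,
        Finset.sum_const, nsmul_eq_mul, div_eq_mul_inv]
    rw [hP, div_le_iff₀ hΩ0]
    set σ : ℝ := Real.sqrt km with hσ
    have hkmsq : σ * σ = km := Real.mul_self_sqrt hkm0.le
    have hσ0 : (0:ℝ) < σ := Real.sqrt_pos.mpr hkm0
    have key := le_trans hmarkov hexp
    rw [hC]
    have hrw : Ω * ((Fintype.card (Fin n × Fin n) : ℝ) * σ / (2 * km))
        = ((Fintype.card (Fin n × Fin n) : ℝ) / (2 * α) * σ⁻¹ * Ω) * α := by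
      rw [show km = σ * σ from hkmsq.symm]
      field_simp
    rw [hrw] at key
    exact le_of_mul_le_mul_right key hα
  -- conclude by squeezing
  have h1 : Tendsto (fun k : ℕ => Real.sqrt ((k:ℝ) * m)) atTop atTop :=
    tendsto_sqrt_atTop.comp
      (Tendsto.atTop_mul_const (by exact_mod_cast hm0) tendsto_natCast_atTop_atTop)
  have h2 : Tendsto (fun k : ℕ => C * (Real.sqrt ((k:ℝ) * m))⁻¹) atTop (nhds 0) := by
    have := (h1.inv_tendsto_atTop).const_mul C
    simpa using this
  refine tendsto_of_tendsto_of_tendsto_of_le_of_le' tendsto_const_nhds h2 ?_ ?_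
  · exact Eventually.of_forall fun k => ENNReal.toReal_nonneg
  · exact eventually_atTop.mpr ⟨1, hbound⟩
end
end

section
/- Let n be a positive integer, let B₁ : Fin n → Fin p₁ and B₂ : Fin n → Fin p₂ be two surjective block assignments with all blocks nonempty, and let M₁, M₂ be block adjacency matrices with equal total mass m > 0. For k ≥ 1, let S₁(k) = (B₁, k·M₁) and S₂(k) = (B₂, k·M₂) be the corresponding stochastic blockmodels, with barycenters G₁(k) and G₂(k), and let d = ned(G₁(k), G₂(k)) (which does not depend on k). Let (G_k) be a sequence of random multigraphs where G_k is drawn from S₁(k). Then the edit distance expected value EDEV(G_k, S₂(k)) = E_{H ~ S₂(k)}[ned(G_k, H)] converges to d in probability as k → ∞: for every α > 0, ℙ[|EDEV(G_k, S₂(k)) − d| > α] → 0. -/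
open MeasureTheory Filter Finset

noncomputable section

/-- Expectation of a real-valued function under a probability mass function on a finite type. -/
def pmfExp {Ω : Type*} [Fintype Ω] (μ : PMF Ω) (f : Ω → ℝ) : ℝ :=
  ∑ ω : Ω, (μ ω).toReal * f ω

lemma pmfExp_sum_one {Ω : Type*} [Fintype Ω] (μ : PMF Ω) :
    ∑ ω : Ω, (μ ω).toReal = 1 := by
  have h := μ.tsum_coe
  rw [tsum_fintype] at h
  have := congrArg ENNReal.toReal h
  rwa [ENNReal.toReal_sum (fun a _ => μ.apply_ne_top a), ENNReal.toReal_one] at this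

lemma pmfExp_const {Ω : Type*} [Fintype Ω] (μ : PMF Ω) (c : ℝ) :
    pmfExp μ (fun _ => c) = c := by
  simp [pmfExp, ← Finset.sum_mul, pmfExp_sum_one]

lemma pmfExp_mono {Ω : Type*} [Fintype Ω] (μ : PMF Ω) {f g : Ω → ℝ}
    (h : ∀ ω, f ω ≤ g ω) : pmfExp μ f ≤ pmfExp μ g :=
  Finset.sum_le_sum fun ω _ => mul_le_mul_of_nonneg_left (h ω) ENNReal.toReal_nonneg

lemma abs_pmfExp_le {Ω : Type*} [Fintype Ω] (μ : PMF Ω) (f : Ω → ℝ) :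
    |pmfExp μ f| ≤ pmfExp μ (fun ω => |f ω|) := by
  refine (Finset.abs_sum_le_sum_abs _ _).trans ?_
  refine Finset.sum_le_sum fun ω _ => ?_
  rw [abs_mul, abs_of_nonneg (ENNReal.toReal_nonneg : (0:ℝ) ≤ (μ ω).toReal)]

lemma pmfExp_finsetSum {Ω ι : Type*} [Fintype Ω] (μ : PMF Ω) (s : Finset ι) (f : ι → Ω → ℝ) :
    pmfExp μ (fun ω => ∑ i ∈ s, f i ω) = ∑ i ∈ s, pmfExp μ (f i) := by
  simp only [pmfExp, Finset.mul_sum]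
  exact Finset.sum_comm

lemma pmfExp_const_mul {Ω : Type*} [Fintype Ω] (μ : PMF Ω) (c : ℝ) (f : Ω → ℝ) :
    pmfExp μ (fun ω => c * f ω) = c * pmfExp μ f := by
  simp only [pmfExp, Finset.mul_sum]; apply Finset.sum_congr rfl; intros; ring

lemma pmfExp_uniform {Ω : Type*} [Fintype Ω] [Nonempty Ω] (f : Ω → ℝ) :
    pmfExp (PMF.uniformOfFintype Ω) f = (∑ ω, f ω) / Fintype.card Ω := by
  simp only [pmfExp, PMF.uniformOfFintype_apply]
  rw [Finset.sum_div]
  apply Finset.sum_congr rfl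
  intros ω _
  rw [ENNReal.toReal_inv]
  simp [div_eq_mul_inv, mul_comm]

-- Markov
lemma pmf_markov {Ω : Type*} [Fintype Ω] (μ : PMF Ω) (f : Ω → ℝ) {α : ℝ} (hα : 0 < α) :
    (μ.toOuterMeasure {ω | |f ω| > α}).toReal ≤ pmfExp μ (fun ω => |f ω|) / α := by
  classical
  have hset : (μ.toOuterMeasure {ω | |f ω| > α}).toReal
      = ∑ ω ∈ univ.filter (fun ω => |f ω| > α), (μ ω).toReal := by
    rw [PMF.toOuterMeasure_apply, tsum_fintype,
      ENNReal.toReal_sum (fun a _ => ne_top_of_le_ne_top (μ.apply_ne_top a)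
        (Set.indicator_le_self _ _ a))]
    rw [Finset.sum_filter]
    apply Finset.sum_congr rfl
    intro ω _
    by_cases h : |f ω| > α
    · rw [Set.indicator_of_mem (by exact h), if_pos h]
    · rw [Set.indicator_of_notMem (by exact h), if_neg h]; simp
  rw [hset, le_div_iff₀ hα]
  calc (∑ ω ∈ univ.filter (fun ω => |f ω| > α), (μ ω).toReal) * α
      = ∑ ω ∈ univ.filter (fun ω => |f ω| > α), (μ ω).toReal * α := by rw [Finset.sum_mul]
    _ ≤ ∑ ω ∈ univ.filter (fun ω => |f ω| > α), (μ ω).toReal * |f ω| := by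
        refine Finset.sum_le_sum fun ω hω => ?_
        exact mul_le_mul_of_nonneg_left (le_of_lt (Finset.mem_filter.mp hω).2)
          ENNReal.toReal_nonneg
    _ ≤ ∑ ω, (μ ω).toReal * |f ω| := by
        refine Finset.sum_le_sum_of_subset_of_nonneg (Finset.filter_subset _ _) ?_
        intros; positivity

lemma pmfExp_add {Ω : Type*} [Fintype Ω] (μ : PMF Ω) (f g : Ω → ℝ) :
    pmfExp μ (fun ω => f ω + g ω) = pmfExp μ f + pmfExp μ g := by
  simp only [pmfExp, mul_add, Finset.sum_add_distrib]

lemma pmfExp_sub_const {Ω : Type*} [Fintype Ω] (μ : PMF Ω) (f : Ω → ℝ) (c : ℝ) :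
    pmfExp μ (fun ω => f ω - c) = pmfExp μ f - c := by
  simp only [pmfExp, mul_sub, Finset.sum_sub_distrib, ← Finset.sum_mul, pmfExp_sum_one, one_mul]

lemma bary_scale {n p : ℕ} (B : Fin n → Fin p) (M : Fin p × Fin p → ℕ) (k : ℕ)
    (uv : Fin n × Fin n) :
    sbmBarycenter B (fun rs => k * M rs) uv = (k : ℝ) * sbmBarycenter B M uv := by
  unfold sbmBarycenter
  push_cast
  ring

lemma sqrt_tendsto_atTop : Filter.Tendsto Real.sqrt Filter.atTop Filter.atTop := by
  rw [Filter.tendsto_atTop_atTop]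
  intro b
  refine ⟨b^2 ⊔ 0, fun a ha => ?_⟩
  calc b ≤ |b| := le_abs_self b
    _ = Real.sqrt (b^2) := (Real.sqrt_sq_eq_abs b).symm
    _ ≤ Real.sqrt a := Real.sqrt_le_sqrt (le_trans le_sup_left ha)
section counting
variable {ι P : Type*} [Fintype ι] [Fintype P] [DecidableEq ι] [DecidableEq P]

lemma sum_eval_one (a : ι) (g : P → ℝ) :
    (Fintype.card P : ℝ) * ∑ f : ι → P, g (f a) = (Fintype.card P : ℝ) ^ Fintype.card ι * ∑ y, g y := by
  have hK : 1 ≤ Fintype.card ι := Fintype.card_pos_iff.mpr ⟨a⟩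
  rw [← (Equiv.funSplitAt a P).symm.sum_comp (fun f => g (f a))]
  simp only [Equiv.funSplitAt_symm_apply, Fintype.sum_prod_type, dite_true, dif_pos]
  simp only [Finset.sum_const, Finset.card_univ, nsmul_eq_mul]
  rw [← Finset.mul_sum, ← mul_assoc]
  congr 1
  rw [Fintype.card_fun]
  have hcard : Fintype.card {j // j ≠ a} = Fintype.card ι - 1 := by
    simp [Fintype.card_subtype_compl, Fintype.card_subtype_eq]
  rw [hcard]
  push_cast
  rw [← pow_succ', Nat.sub_add_cancel hK]

lemma sum_eval_two {a b : ι} (hab : a ≠ b) (g h : P → ℝ) :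
    (Fintype.card P : ℝ) ^ 2 * ∑ f : ι → P, g (f a) * h (f b)
      = (Fintype.card P : ℝ) ^ Fintype.card ι * (∑ y, g y) * ∑ y, h y := by
  have hK : 1 ≤ Fintype.card ι := Fintype.card_pos_iff.mpr ⟨a⟩
  rw [← (Equiv.funSplitAt a P).symm.sum_comp (fun f => g (f a) * h (f b))]
  simp only [Equiv.funSplitAt_symm_apply, Fintype.sum_prod_type, dite_true, dif_pos,
    dif_neg (Ne.symm hab)]
  have inner : ∀ y : P, ∑ f' : {j // j ≠ a} → P, g y * h (f' ⟨b, Ne.symm hab⟩)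
      = g y * ∑ f' : {j // j ≠ a} → P, h (f' ⟨b, Ne.symm hab⟩) := fun y => by
    rw [Finset.mul_sum]
  rw [Finset.sum_congr rfl fun y _ => inner y, ← Finset.sum_mul]
  have h1 := sum_eval_one (⟨b, Ne.symm hab⟩ : {j // j ≠ a}) h
  have hcard : Fintype.card {j // j ≠ a} = Fintype.card ι - 1 := by
    simp [Fintype.card_subtype_compl, Fintype.card_subtype_eq]
  rw [hcard] at h1
  have hNN : (Fintype.card P : ℝ) * (Fintype.card P : ℝ) ^ (Fintype.card ι - 1)
      = (Fintype.card P : ℝ) ^ Fintype.card ι := by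
    rw [← pow_succ', Nat.sub_add_cancel hK]
  calc (Fintype.card P : ℝ)^2 * ((∑ y, g y) * ∑ f' : {j // j ≠ a} → P, h (f' ⟨b, Ne.symm hab⟩))
      = (∑ y, g y) * ((Fintype.card P : ℝ) *
          ((Fintype.card P : ℝ) * ∑ f' : {j // j ≠ a} → P, h (f' ⟨b, Ne.symm hab⟩))) := by ring
    _ = (∑ y, g y) * ((Fintype.card P : ℝ) *
          ((Fintype.card P : ℝ) ^ (Fintype.card ι - 1) * ∑ y, h y)) := by rw [h1]
    _ = _ := by rw [← mul_assoc ((Fintype.card P : ℝ)), hNN]; ring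


/-- count as a real number -/
def cnt (f : ι → P) (x : P) : ℝ := ((univ.filter fun a => f a = x).card : ℝ)

lemma cnt_eq_sum (f : ι → P) (x : P) :
    cnt f x = ∑ a : ι, (if f a = x then (1:ℝ) else 0) := by
  rw [cnt, Finset.card_filter]
  push_cast
  rfl

lemma sum_ind (x : P) : ∑ y : P, (if y = x then (1:ℝ) else 0) = 1 := by simp

lemma moment_one (x : P) :
    (Fintype.card P : ℝ) * ∑ f : ι → P, cnt f x
      = (Fintype.card ι : ℝ) * (Fintype.card P : ℝ) ^ Fintype.card ι := by
  have hswap : ∑ f : ι → P, cnt f x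
      = ∑ a : ι, ∑ f : ι → P, (if f a = x then (1:ℝ) else 0) := by
    simp only [cnt_eq_sum]; exact Finset.sum_comm
  rw [hswap, Finset.mul_sum]
  have step : ∀ a : ι, (Fintype.card P : ℝ) * ∑ f : ι → P, (if f a = x then (1:ℝ) else 0)
      = (Fintype.card P : ℝ) ^ Fintype.card ι := fun a => by
    rw [sum_eval_one a (fun y => if y = x then (1:ℝ) else 0), sum_ind, mul_one]
  rw [Finset.sum_congr rfl fun a _ => step a, Finset.sum_const, Finset.card_univ, nsmul_eq_mul]

lemma moment_two (x : P) :
    (Fintype.card P : ℝ)^2 * ∑ f : ι → P, (cnt f x)^2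
      = (Fintype.card ι : ℝ) * (Fintype.card P : ℝ) * (Fintype.card P : ℝ) ^ Fintype.card ι
        + (Fintype.card ι : ℝ) * ((Fintype.card ι : ℝ) - 1)
          * (Fintype.card P : ℝ) ^ Fintype.card ι := by
  set N := (Fintype.card P : ℝ) with hN
  set K := Fintype.card ι with hKdef
  have hswap : ∑ f : ι → P, (cnt f x)^2
      = ∑ a : ι, ∑ b : ι, ∑ f : ι → P,
          (if f a = x then (1:ℝ) else 0) * (if f b = x then (1:ℝ) else 0) := by
    have : ∀ f : ι → P, (cnt f x)^2 = ∑ a : ι, ∑ b : ι,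
        (if f a = x then (1:ℝ) else 0) * (if f b = x then (1:ℝ) else 0) := fun f => by
      rw [cnt_eq_sum, sq, Finset.sum_mul_sum]
    rw [Finset.sum_congr rfl fun f _ => this f]
    rw [Finset.sum_comm]
    refine Finset.sum_congr rfl fun a _ => Finset.sum_comm
  rw [hswap, Finset.mul_sum]
  have diag : ∀ a : ι, N^2 * ∑ f : ι → P,
      (if f a = x then (1:ℝ) else 0) * (if f a = x then (1:ℝ) else 0) = N * N^K := by
    intro a
    have : ∀ f : ι → P, (if f a = x then (1:ℝ) else 0) * (if f a = x then (1:ℝ) else 0)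
        = (if f a = x then (1:ℝ) else 0) := fun f => by by_cases h : f a = x <;> simp [h]
    rw [Finset.sum_congr rfl fun f _ => this f, sq, mul_assoc,
      sum_eval_one a (fun y => if y = x then (1:ℝ) else 0), sum_ind, mul_one]
  have offd : ∀ a b : ι, a ≠ b → N^2 * ∑ f : ι → P,
      (if f a = x then (1:ℝ) else 0) * (if f b = x then (1:ℝ) else 0) = N^K := by
    intro a b hab
    rw [sum_eval_two hab (fun y => if y = x then (1:ℝ) else 0)
      (fun y => if y = x then (1:ℝ) else 0), sum_ind, mul_one, mul_one]
  have per_a : ∀ a : ι, N^2 * ∑ b : ι, ∑ f : ι → P,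
      (if f a = x then (1:ℝ) else 0) * (if f b = x then (1:ℝ) else 0)
      = N * N^K + ((K:ℝ) - 1) * N^K := by
    intro a
    rw [← Finset.add_sum_erase univ _ (Finset.mem_univ a), mul_add, diag a, Finset.mul_sum]
    congr 1
    rw [Finset.sum_congr rfl fun b hb => offd a b (Ne.symm (Finset.ne_of_mem_erase hb)),
      Finset.sum_const, Finset.card_erase_of_mem (Finset.mem_univ a), Finset.card_univ,
      nsmul_eq_mul]
    congr 1
    have hK : 1 ≤ K := Fintype.card_pos_iff.mpr ⟨a⟩
    push_cast [Nat.cast_sub hK]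
    exact_mod_cast Nat.cast_sub (R := ℝ) hK
  calc ∑ a : ι, N ^ 2 * ∑ b : ι, ∑ f : ι → P,
        (if f a = x then (1:ℝ) else 0) * (if f b = x then (1:ℝ) else 0)
      = ∑ _a : ι, (N * N^K + ((K:ℝ) - 1) * N^K) := Finset.sum_congr rfl fun a _ => per_a a
    _ = (K:ℝ) * (N * N^K + ((K:ℝ) - 1) * N^K) := by
        rw [Finset.sum_const, Finset.card_univ, nsmul_eq_mul]
    _ = _ := by ring

lemma sum_sq_dev_le [Nonempty P] (x : P) :
    ∑ f : ι → P, (cnt f x - (Fintype.card ι : ℝ) / (Fintype.card P : ℝ))^2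
      ≤ (Fintype.card ι : ℝ) * (Fintype.card P : ℝ) ^ Fintype.card ι := by
  set N := (Fintype.card P : ℝ) with hN
  set K := Fintype.card ι with hKdef
  set T := N ^ K with hT
  have hN1 : (1:ℝ) ≤ N := by
    rw [hN]; exact_mod_cast Fintype.card_pos_iff.mpr ‹Nonempty P›
  have hN0 : (0:ℝ) < N := lt_of_lt_of_le one_pos hN1
  have hT0 : (0:ℝ) ≤ T := by positivity
  have hK0 : (0:ℝ) ≤ (K:ℝ) := Nat.cast_nonneg _
  have hA := moment_one (ι := ι) x
  have hB := moment_two (ι := ι) x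
  have hcardfun : ((Fintype.card (ι → P) : ℕ) : ℝ) = T := by
    rw [Fintype.card_fun]; push_cast; rfl
  have key : N^2 * ∑ f : ι → P, (cnt f x - (K:ℝ)/N)^2 = (K:ℝ) * T * (N - 1) := by
    have hsq : ∀ f : ι → P, N^2 * (cnt f x - (K:ℝ)/N)^2
        = N^2 * (cnt f x)^2 - 2*(K:ℝ)*N*(cnt f x) + (K:ℝ)^2 := fun f => by
      field_simp
      ring
    have hA' : N * ∑ f : ι → P, cnt f x = (K:ℝ) * T := moment_one x
    have hB' : N^2 * ∑ f : ι → P, (cnt f x)^2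
        = (K:ℝ) * N * T + (K:ℝ) * ((K:ℝ) - 1) * T := moment_two x
    rw [Finset.mul_sum, Finset.sum_congr rfl fun f _ => hsq f]
    rw [Finset.sum_add_distrib, Finset.sum_sub_distrib, ← Finset.mul_sum, ← Finset.mul_sum,
      Finset.sum_const, Finset.card_univ, nsmul_eq_mul, hcardfun]
    linear_combination hB' - 2*(K:ℝ)*hA'
  have hineq : N^2 * ∑ f : ι → P, (cnt f x - (K:ℝ)/N)^2 ≤ N^2 * ((K:ℝ) * T) := by
    rw [key]
    nlinarith [mul_nonneg (mul_nonneg hK0 hT0) (mul_nonneg (le_trans zero_le_one hN1)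
      (sub_nonneg.mpr hN1)), mul_nonneg hK0 hT0]
  exact le_of_mul_le_mul_left hineq (by positivity)

lemma sum_abs_dev_le [Nonempty P] (x : P) :
    ∑ f : ι → P, |cnt f x - (Fintype.card ι : ℝ) / (Fintype.card P : ℝ)|
      ≤ (Fintype.card P : ℝ) ^ Fintype.card ι * Real.sqrt (Fintype.card ι) := by
  set N := (Fintype.card P : ℝ) with hN
  set K := Fintype.card ι with hKdef
  set T := N ^ K with hT
  have hT0 : (0:ℝ) ≤ T := by positivity
  have hK0 : (0:ℝ) ≤ (K:ℝ) := Nat.cast_nonneg _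
  set S := ∑ f : ι → P, |cnt f x - (K:ℝ)/N| with hS
  have hS0 : 0 ≤ S := Finset.sum_nonneg fun f _ => abs_nonneg _
  have hCS : S^2 ≤ (∑ f : ι → P, |cnt f x - (K:ℝ)/N|^2) * ∑ _f : ι → P, (1:ℝ)^2 := by
    have := Finset.sum_mul_sq_le_sq_mul_sq Finset.univ
      (fun f : ι → P => |cnt f x - (K:ℝ)/N|) (fun _ => (1:ℝ))
    simpa using this
  have hsq : ∑ f : ι → P, |cnt f x - (K:ℝ)/N|^2 = ∑ f : ι → P, (cnt f x - (K:ℝ)/N)^2 :=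
    Finset.sum_congr rfl fun f _ => sq_abs _
  have hcardfun : ((Fintype.card (ι → P) : ℕ) : ℝ) = T := by
    rw [Fintype.card_fun]; push_cast; rfl
  have hone : (∑ _f : ι → P, (1:ℝ)^2) = T := by
    simp only [one_pow, Finset.sum_const, Finset.card_univ, nsmul_eq_mul, mul_one]
    exact hcardfun
  have hvar : (∑ f : ι → P, (cnt f x - (K:ℝ)/N)^2) ≤ (K:ℝ) * T := sum_sq_dev_le x
  have hS2 : S^2 ≤ T^2 * (K:ℝ) := by
    calc S^2 ≤ (∑ f : ι → P, |cnt f x - (K:ℝ)/N|^2) * ∑ _f : ι → P, (1:ℝ)^2 := hCS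
      _ = (∑ f : ι → P, (cnt f x - (K:ℝ)/N)^2) * T := by rw [hsq, hone]
      _ ≤ ((K:ℝ) * T) * T := by
          exact mul_le_mul_of_nonneg_right hvar hT0
      _ = T^2 * (K:ℝ) := by ring
  calc S = Real.sqrt (S^2) := (Real.sqrt_sq hS0).symm
    _ ≤ Real.sqrt (T^2 * (K:ℝ)) := Real.sqrt_le_sqrt hS2
    _ = T * Real.sqrt (K:ℝ) := by
        rw [Real.sqrt_mul (sq_nonneg T), Real.sqrt_sq hT0]

end counting
-- pmfExp of a single-coordinate function under product-uniform
lemma pmfExp_eval {κ : Type*} [Fintype κ] [DecidableEq κ] (T : κ → Type*)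
    [∀ i, Fintype (T i)] [∀ i, Nonempty (T i)] (i₀ : κ) (g : T i₀ → ℝ) :
    pmfExp (PMF.uniformOfFintype (∀ i, T i)) (fun ω => g (ω i₀))
      = (∑ t, g t) / Fintype.card (T i₀) := by
  rw [pmfExp_uniform]
  rw [← (Equiv.piSplitAt i₀ T).symm.sum_comp (fun ω => g (ω i₀))]
  simp only [Equiv.piSplitAt_symm_apply, Fintype.sum_prod_type, dite_true, dif_pos]
  simp only [Finset.sum_const, Finset.card_univ, nsmul_eq_mul]
  rw [← Finset.mul_sum]
  have hcard : Fintype.card (∀ i, T i)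
      = Fintype.card (T i₀) * Fintype.card (∀ j : {j // j ≠ i₀}, T j) :=
    (Fintype.card_congr (Equiv.piSplitAt i₀ T)).trans (Fintype.card_prod _ _)
  rw [hcard]
  have h0 : (0:ℝ) < (Fintype.card (∀ j : {j // j ≠ i₀}, T j) : ℝ) := by
    have : Nonempty (∀ j : {j // j ≠ i₀}, T j) := ⟨fun j => Classical.arbitrary _⟩
    exact_mod_cast Fintype.card_pos
  push_cast
  have hc0 : (Fintype.card (T i₀) : ℝ) ≠ 0 := by
    have : (0:ℕ) < Fintype.card (T i₀) := Fintype.card_pos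
    exact_mod_cast this.ne'
  field_simp

lemma card_block_pairs {n p : ℕ} (B : Fin n → Fin p) (r s : Fin p) :
    Fintype.card {uv : Fin n × Fin n // B uv.1 = r ∧ B uv.2 = s}
      = (univ.filter fun w : Fin n => B w = r).card * (univ.filter fun w : Fin n => B w = s).card := by
  have e : {uv : Fin n × Fin n // B uv.1 = r ∧ B uv.2 = s}
      ≃ {u : Fin n // B u = r} × {v : Fin n // B v = s} :=
    { toFun := fun z => (⟨z.1.1, z.2.1⟩, ⟨z.1.2, z.2.2⟩),
      invFun := fun z => ⟨(z.1.1, z.2.1), z.1.2, z.2.2⟩,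
      left_inv := fun z => rfl,
      right_inv := fun z => rfl }
  rw [Fintype.card_congr e, Fintype.card_prod, Fintype.card_subtype, Fintype.card_subtype]

lemma exp_abs_dev {n p : ℕ} (B : Fin n → Fin p) (hB : Function.Surjective B)
    (M : Fin p × Fin p → ℕ) (uv : Fin n × Fin n) :
    pmfExp (sbmPMF B hB M) (fun η => |(sbmWeight η uv : ℝ) - sbmBarycenter B M uv|)
      ≤ Real.sqrt (M (B uv.1, B uv.2)) := by
  classical
  set rs₀ : Fin p × Fin p := (B uv.1, B uv.2) with hrs
  haveI hne : ∀ rs : Fin p × Fin p,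
      Nonempty {xy : Fin n × Fin n // B xy.1 = rs.1 ∧ B xy.2 = rs.2} := fun rs =>
    ⟨⟨((hB rs.1).choose, (hB rs.2).choose), (hB rs.1).choose_spec, (hB rs.2).choose_spec⟩⟩
  haveI : ∀ rs : Fin p × Fin p, Nonempty (Fin (M rs) →
      {xy : Fin n × Fin n // B xy.1 = rs.1 ∧ B xy.2 = rs.2}) := fun rs =>
    ⟨fun _ => Classical.arbitrary _⟩
  haveI hNE : Nonempty (SBMSpace B M) := ⟨fun rs => Classical.arbitrary _⟩
  set P := {xy : Fin n × Fin n // B xy.1 = rs₀.1 ∧ B xy.2 = rs₀.2} with hP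
  set x : P := ⟨uv, rfl, rfl⟩ with hx
  have hμ : sbmPMF B hB M = PMF.uniformOfFintype (SBMSpace B M) := rfl
  have hwt : ∀ η : SBMSpace B M, (sbmWeight η uv : ℝ) = cnt (η rs₀) x := by
    intro η
    unfold sbmWeight cnt
    congr 2
    apply Finset.filter_congr
    intro a _
    simp [hx, Subtype.ext_iff]
    exact Iff.rfl
  have hcP : ((Fintype.card P : ℕ) : ℝ)
      = ((univ.filter fun w : Fin n => B w = B uv.1).card : ℝ)
        * ((univ.filter fun w : Fin n => B w = B uv.2).card : ℝ) := by
    rw [show Fintype.card P = _ from card_block_pairs B rs₀.1 rs₀.2]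
    push_cast
    rfl
  have hbary : sbmBarycenter B M uv
      = (Fintype.card (Fin (M rs₀)) : ℝ) / (Fintype.card P : ℝ) := by
    rw [sbmBarycenter, Fintype.card_fin, hcP]
  have hfun : (fun η : SBMSpace B M => |(sbmWeight η uv : ℝ) - sbmBarycenter B M uv|)
      = fun η : SBMSpace B M =>
        (fun t : Fin (M rs₀) → P =>
          |cnt t x - (Fintype.card (Fin (M rs₀)) : ℝ) / (Fintype.card P : ℝ)|) (η rs₀) :=
    funext fun η => by rw [hwt η, hbary]
  have e1 : pmfExp (sbmPMF B hB M)
      (fun η => |(sbmWeight η uv : ℝ) - sbmBarycenter B M uv|)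
      = (∑ t : Fin (M rs₀) → P,
          |cnt t x - (Fintype.card (Fin (M rs₀)) : ℝ) / (Fintype.card P : ℝ)|)
        / Fintype.card (Fin (M rs₀) → P) := by
    rw [hμ, hfun]
    exact pmfExp_eval
      (fun rs : Fin p × Fin p =>
        Fin (M rs) → {xy : Fin n × Fin n // B xy.1 = rs.1 ∧ B xy.2 = rs.2}) rs₀
      (fun t : Fin (M rs₀) → P =>
        |cnt t x - (Fintype.card (Fin (M rs₀)) : ℝ) / (Fintype.card P : ℝ)|)
  rw [e1]
  have hsum := sum_abs_dev_le (ι := Fin (M rs₀)) (P := P) x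
  have hcT : (0:ℝ) < (Fintype.card (Fin (M rs₀) → P) : ℝ) := by
    have : (0:ℕ) < Fintype.card (Fin (M rs₀) → P) := Fintype.card_pos
    exact_mod_cast this
  have step : (∑ t : Fin (M rs₀) → P,
        |cnt t x - (Fintype.card (Fin (M rs₀)) : ℝ) / (Fintype.card P : ℝ)|)
        / (Fintype.card (Fin (M rs₀) → P) : ℝ)
      ≤ ((Fintype.card P : ℝ) ^ Fintype.card (Fin (M rs₀))
          * Real.sqrt (Fintype.card (Fin (M rs₀))))
        / (Fintype.card (Fin (M rs₀) → P) : ℝ) := by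
    gcongr
  refine step.trans (le_of_eq ?_)
  rw [Fintype.card_fun, Fintype.card_fin]
  have hNP : (0:ℝ) < (Fintype.card P : ℝ) := by
    have : (0:ℕ) < Fintype.card P := Fintype.card_pos
    exact_mod_cast this
  push_cast
  rw [mul_comm, mul_div_assoc, div_self (by positivity), mul_one]

/-- Let `S₁(k) = (B₁, k·M₁)` and `S₂(k) = (B₂, k·M₂)` be stochastic blockmodels
with surjective block assignments and equal total mass `m > 0`, and let `d` be the (k-independent)
normalized edit distance between their barycenters. If `G_k` is drawn from `S₁(k)`, then
`EDEV(G_k, S₂(k)) = E_{H ~ S₂(k)}[ned(G_k, H)]` converges to `d` in probability: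
for every `α > 0`, `ℙ[|EDEV(G_k, S₂(k)) − d| > α] → 0` as `k → ∞`. -/
theorem stmt2 (n p₁ p₂ : ℕ) (hn : 0 < n)
    (B₁ : Fin n → Fin p₁) (B₂ : Fin n → Fin p₂)
    (hB₁ : Function.Surjective B₁) (hB₂ : Function.Surjective B₂)
    (M₁ : Fin p₁ × Fin p₁ → ℕ) (M₂ : Fin p₂ × Fin p₂ → ℕ)
    (m : ℕ) (hm0 : 0 < m)
    (hm₁ : ∑ rs : Fin p₁ × Fin p₁, M₁ rs = m) (hm₂ : ∑ rs : Fin p₂ × Fin p₂, M₂ rs = m)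
    (d : ℝ)
    (hd : d = (1 / (2 * (m : ℝ))) *
        ∑ uv : Fin n × Fin n, |sbmBarycenter B₁ M₁ uv - sbmBarycenter B₂ M₂ uv|) :
    ∀ α : ℝ, 0 < α →
      Tendsto
        (fun k : ℕ =>
          ((sbmPMF B₁ hB₁ (fun rs => k * M₁ rs)).toOuterMeasure
            {ω : SBMSpace B₁ (fun rs => k * M₁ rs) |
              |pmfExp (sbmPMF B₂ hB₂ (fun rs => k * M₂ rs))
                  (fun η => ned ((k : ℝ) * (m : ℝ))
                    (fun uv => (sbmWeight ω uv : ℝ)) (fun uv => (sbmWeight η uv : ℝ))) - d|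
                > α}).toReal)
        atTop (nhds 0) := by
  intro α hα
  have hm0' : (0:ℝ) < (m:ℝ) := by exact_mod_cast hm0
  -- the dominating sequence
  set g : ℕ → ℝ := fun k => (n:ℝ)^2 / (α * Real.sqrt ((k:ℝ) * (m:ℝ))) with hg
  refine squeeze_zero' (g := g)
    (Filter.Eventually.of_forall fun k => ENNReal.toReal_nonneg) ?_ ?_
  · -- eventual bound
    rw [Filter.eventually_atTop]
    refine ⟨1, fun k hk1 => ?_⟩
    have hk0 : (0:ℝ) < (k:ℝ) := by exact_mod_cast hk1
    have hK0 : (0:ℝ) < (k:ℝ) * (m:ℝ) := mul_pos hk0 hm0'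
    set μ₁ := sbmPMF B₁ hB₁ (fun rs => k * M₁ rs) with hμ₁
    set μ₂ := sbmPMF B₂ hB₂ (fun rs => k * M₂ rs) with hμ₂
    set F : SBMSpace B₁ (fun rs => k * M₁ rs) → ℝ := fun ω =>
      pmfExp μ₂ (fun η => ned ((k : ℝ) * (m : ℝ))
        (fun uv => (sbmWeight ω uv : ℝ)) (fun uv => (sbmWeight η uv : ℝ))) - d with hF
    -- per-pair bounds on blocks
    have hM₁le : ∀ rs, M₁ rs ≤ m := fun rs =>
      hm₁ ▸ Finset.single_le_sum (fun i _ => Nat.zero_le _) (Finset.mem_univ rs)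
    have hM₂le : ∀ rs, M₂ rs ≤ m := fun rs =>
      hm₂ ▸ Finset.single_le_sum (fun i _ => Nat.zero_le _) (Finset.mem_univ rs)
    -- deviation bounds
    have hdev₁ : ∀ uv : Fin n × Fin n,
        pmfExp μ₁ (fun ω => |(sbmWeight ω uv : ℝ)
          - sbmBarycenter B₁ (fun rs => k * M₁ rs) uv|) ≤ Real.sqrt ((k:ℝ) * (m:ℝ)) := by
      intro uv
      refine (exp_abs_dev B₁ hB₁ (fun rs => k * M₁ rs) uv).trans ?_
      apply Real.sqrt_le_sqrt
      push_cast
      have := hM₁le (B₁ uv.1, B₁ uv.2)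
      have : (M₁ (B₁ uv.1, B₁ uv.2) : ℝ) ≤ (m:ℝ) := by exact_mod_cast this
      nlinarith
    have hdev₂ : ∀ uv : Fin n × Fin n,
        pmfExp μ₂ (fun η => |(sbmWeight η uv : ℝ)
          - sbmBarycenter B₂ (fun rs => k * M₂ rs) uv|) ≤ Real.sqrt ((k:ℝ) * (m:ℝ)) := by
      intro uv
      refine (exp_abs_dev B₂ hB₂ (fun rs => k * M₂ rs) uv).trans ?_
      apply Real.sqrt_le_sqrt
      push_cast
      have := hM₂le (B₂ uv.1, B₂ uv.2)
      have : (M₂ (B₂ uv.1, B₂ uv.2) : ℝ) ≤ (m:ℝ) := by exact_mod_cast this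
      nlinarith
    -- rewrite d with the k-scaled barycenters
    have hd' : d = (1 / (2 * ((k:ℝ) * (m:ℝ)))) * ∑ uv : Fin n × Fin n,
        |sbmBarycenter B₁ (fun rs => k * M₁ rs) uv
          - sbmBarycenter B₂ (fun rs => k * M₂ rs) uv| := by
      rw [hd]
      have : ∀ uv : Fin n × Fin n,
          |sbmBarycenter B₁ (fun rs => k * M₁ rs) uv
            - sbmBarycenter B₂ (fun rs => k * M₂ rs) uv|
          = (k:ℝ) * |sbmBarycenter B₁ M₁ uv - sbmBarycenter B₂ M₂ uv| := by
        intro uv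
        rw [bary_scale, bary_scale, ← mul_sub, abs_mul, abs_of_nonneg hk0.le]
      rw [Finset.sum_congr rfl fun uv _ => this uv, ← Finset.mul_sum]
      field_simp
    -- pointwise bound on |F ω|
    have hpoint : ∀ ω, |F ω| ≤ (1 / (2 * ((k:ℝ) * (m:ℝ)))) *
        ∑ uv : Fin n × Fin n,
          (|(sbmWeight ω uv : ℝ) - sbmBarycenter B₁ (fun rs => k * M₁ rs) uv|
            + pmfExp μ₂ (fun η => |(sbmWeight η uv : ℝ)
                - sbmBarycenter B₂ (fun rs => k * M₂ rs) uv|)) := by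
      intro ω
      have hEDEV : pmfExp μ₂ (fun η => ned ((k : ℝ) * (m : ℝ))
          (fun uv => (sbmWeight ω uv : ℝ)) (fun uv => (sbmWeight η uv : ℝ)))
          = (1 / (2 * ((k:ℝ) * (m:ℝ)))) * ∑ uv : Fin n × Fin n,
              pmfExp μ₂ (fun η => |(sbmWeight ω uv : ℝ) - (sbmWeight η uv : ℝ)|) := by
        unfold ned
        rw [pmfExp_const_mul, pmfExp_finsetSum]
      have hFrw : F ω = (1 / (2 * ((k:ℝ) * (m:ℝ)))) * ∑ uv : Fin n × Fin n,
          (pmfExp μ₂ (fun η => |(sbmWeight ω uv : ℝ) - (sbmWeight η uv : ℝ)|)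
            - |sbmBarycenter B₁ (fun rs => k * M₁ rs) uv
                - sbmBarycenter B₂ (fun rs => k * M₂ rs) uv|) := by
        rw [hF]
        simp only [hEDEV]
        rw [hd', Finset.sum_sub_distrib, mul_sub]
      rw [hFrw, abs_mul, abs_of_nonneg (by positivity : (0:ℝ) ≤ 1 / (2 * ((k:ℝ) * (m:ℝ))))]
      apply mul_le_mul_of_nonneg_left _ (by positivity : (0:ℝ) ≤ 1 / (2 * ((k:ℝ) * (m:ℝ))))
      refine (Finset.abs_sum_le_sum_abs _ _).trans (Finset.sum_le_sum fun uv _ => ?_)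
      -- per uv
      set b₁ := sbmBarycenter B₁ (fun rs => k * M₁ rs) uv with hb₁
      set b₂ := sbmBarycenter B₂ (fun rs => k * M₂ rs) uv with hb₂
      have step1 : pmfExp μ₂ (fun η => |(sbmWeight ω uv : ℝ) - (sbmWeight η uv : ℝ)|)
          - |b₁ - b₂|
          = pmfExp μ₂ (fun η =>
              |(sbmWeight ω uv : ℝ) - (sbmWeight η uv : ℝ)| - |b₁ - b₂|) := by
        rw [pmfExp_sub_const]
      rw [step1]
      refine (abs_pmfExp_le μ₂ _).trans ?_
      have hptw : ∀ η : SBMSpace B₂ (fun rs => k * M₂ rs), |(|(sbmWeight ω uv : ℝ) - (sbmWeight η uv : ℝ)| - |b₁ - b₂|)|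
          ≤ |(sbmWeight ω uv : ℝ) - b₁| + |(sbmWeight η uv : ℝ) - b₂| := by
        intro η
        refine (abs_abs_sub_abs_le_abs_sub _ _).trans ?_
        have : (sbmWeight ω uv : ℝ) - (sbmWeight η uv : ℝ) - (b₁ - b₂)
            = ((sbmWeight ω uv : ℝ) - b₁) - ((sbmWeight η uv : ℝ) - b₂) := by ring
        rw [this]
        exact abs_sub _ _
      refine (pmfExp_mono μ₂ hptw).trans ?_
      rw [pmfExp_add]
      have : pmfExp μ₂ (fun _ => |(sbmWeight ω uv : ℝ) - b₁|)
          = |(sbmWeight ω uv : ℝ) - b₁| := pmfExp_const μ₂ _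
      rw [this]
    -- expectation bound
    have hexp : pmfExp μ₁ (fun ω => |F ω|) ≤ (n:ℝ)^2 / Real.sqrt ((k:ℝ) * (m:ℝ)) := by
      refine (pmfExp_mono μ₁ hpoint).trans ?_
      rw [pmfExp_const_mul, pmfExp_finsetSum]
      have hterm : ∀ uv : Fin n × Fin n,
          pmfExp μ₁ (fun ω =>
            |(sbmWeight ω uv : ℝ) - sbmBarycenter B₁ (fun rs => k * M₁ rs) uv|
              + pmfExp μ₂ (fun η => |(sbmWeight η uv : ℝ)
                  - sbmBarycenter B₂ (fun rs => k * M₂ rs) uv|))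
          ≤ 2 * Real.sqrt ((k:ℝ) * (m:ℝ)) := by
        intro uv
        rw [pmfExp_add, pmfExp_const]
        have h1 := hdev₁ uv
        have h2 := hdev₂ uv
        linarith
      have hsum : ∑ uv : Fin n × Fin n,
          pmfExp μ₁ (fun ω =>
            |(sbmWeight ω uv : ℝ) - sbmBarycenter B₁ (fun rs => k * M₁ rs) uv|
              + pmfExp μ₂ (fun η => |(sbmWeight η uv : ℝ)
                  - sbmBarycenter B₂ (fun rs => k * M₂ rs) uv|))
          ≤ (n:ℝ)^2 * (2 * Real.sqrt ((k:ℝ) * (m:ℝ))) := by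
        refine (Finset.sum_le_sum fun uv _ => hterm uv).trans (le_of_eq ?_)
        rw [Finset.sum_const, Finset.card_univ, nsmul_eq_mul]
        congr 1
        simp [Fintype.card_prod]
        push_cast
        ring
      have hc0 : (0:ℝ) ≤ 1 / (2 * ((k:ℝ) * (m:ℝ))) := by positivity
      refine (mul_le_mul_of_nonneg_left hsum hc0).trans (le_of_eq ?_)
      have hs0 : (0:ℝ) < Real.sqrt ((k:ℝ) * (m:ℝ)) := Real.sqrt_pos.mpr hK0
      set s := Real.sqrt ((k:ℝ) * (m:ℝ)) with hsdef
      have hs : s * s = (k:ℝ) * (m:ℝ) := Real.mul_self_sqrt hK0.le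
      rw [← hs]
      field_simp
    -- Markov
    refine (pmf_markov μ₁ F hα).trans ?_
    have h1 : pmfExp μ₁ (fun ω => |F ω|) / α ≤ ((n:ℝ)^2 / Real.sqrt ((k:ℝ) * (m:ℝ))) / α := by
      gcongr
    refine h1.trans (le_of_eq ?_)
    simp only [hg]
    rw [div_div, mul_comm]
  · -- limit of g
    simp only [hg]
    have h1 : Filter.Tendsto (fun k : ℕ => (k:ℝ) * (m:ℝ)) atTop atTop :=
      Filter.Tendsto.atTop_mul_const hm0' tendsto_natCast_atTop_atTop
    have h2 : Filter.Tendsto (fun k : ℕ => α * Real.sqrt ((k:ℝ) * (m:ℝ))) atTop atTop :=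
      (sqrt_tendsto_atTop.comp h1).const_mul_atTop hα
    exact Filter.Tendsto.div_atTop tendsto_const_nhds h2
end
end
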